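/- arXiv:math/9304208 — 2 statements merged into one kernel-verified Lean document; each statement's English description precedes it below -/
import Mathlib

section
/- Let G be a Polish group acting continuously on a Polish space X, U ⊆ G open nonempty, and A ⊆ X Borel. Then the Vaught transform A^{ΔU} = {x ∈ X : {g ∈ U : g·x ∈ A} is nonmeager in U} is Borel, and for B open in X, B^{ΔU} is open. -/
/-!
For open `B` the set `{g ∈ U | g • x ∈ B}` is open, hence nonmeagre iff nonempty, so
`B^{ΔU} = ⋃_{g ∈ U} g⁻¹ B` is open. The Borel sets `A` for which every `A^{ΔU}` (`U` open) is
Borel contain the open sets and are closed under countable unions, since a countable union is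
meagre iff each piece is. They are closed under complements by localization: a Baire measurable
set is nonmeagre in `U` iff it is comeagre in some nonempty basic open `W ⊆ U`, so
`(Aᶜ)^{ΔU}` is the union of the complements of `A^{ΔW}` over the countably many such `W`.
-/

open Set Filter TopologicalSpace

section Meagre

variable {α : Type*} [TopologicalSpace α]

theorem IsOpen.isMeagre_image_val_iff {U : Set α} (hU : IsOpen U) {s : Set U} :
    IsMeagre (Subtype.val '' s) ↔ IsMeagre s := by
  refine ⟨fun h => ?_, IsMeagre.image_val⟩
  simpa [Subtype.val_injective.preimage_image] using
    h.preimage_of_isOpenMap continuous_subtype_val hU.isOpenMap_subtype_val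

theorem IsOpen.not_isMeagre_iff_nonempty [BaireSpace α] {s : Set α} (hs : IsOpen s) :
    ¬ IsMeagre s ↔ s.Nonempty :=
  ⟨nonempty_of_not_isMeagre, not_isMeagre_of_isOpen hs⟩

theorem not_isMeagre_iUnion_iff {ι : Sort*} [Countable ι] {s : ι → Set α} :
    ¬ IsMeagre (⋃ i, s i) ↔ ∃ i, ¬ IsMeagre (s i) := by
  rw [← not_forall, not_iff_not]
  exact ⟨fun h i => h.mono (subset_iUnion s i), isMeagre_iUnion⟩

theorem BaireMeasurableSet.not_isMeagre_inter_iff [BaireSpace α] {b : Set (Set α)}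
    (hb : IsTopologicalBasis b) {T U : Set α} (hT : BaireMeasurableSet T) (hU : IsOpen U) :
    ¬ IsMeagre (U ∩ T) ↔ ∃ W ∈ b, W ⊆ U ∧ W.Nonempty ∧ IsMeagre (W \ T) := by
  constructor
  · intro hUT
    obtain ⟨u, hu, hTu⟩ := hT.residualEq_isOpen
    have hD : IsMeagre {g | ¬ (g ∈ T ↔ g ∈ u)} :=
      mem_of_superset hTu fun g hg hD => hD (iff_of_eq hg)
    obtain ⟨g, hg⟩ : (u ∩ U).Nonempty := by
      by_contra! h
      refine hUT (hD.mono ?_)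
      rintro g ⟨hgU, hgT⟩ hg
      exact h.subset (⟨hg.mp hgT, hgU⟩ : g ∈ u ∩ U)
    obtain ⟨W, hWb, hgW, hWuU⟩ := hb.exists_subset_of_mem_open hg (hu.inter hU)
    refine ⟨W, hWb, fun g hg => (hWuU hg).2, ⟨g, hgW⟩, hD.mono ?_⟩
    rintro g ⟨hgW, hgT⟩ hg
    exact hgT (hg.mpr (hWuU hgW).1)
  · rintro ⟨W, hWb, hWU, hWne, hWT⟩ hUT
    refine not_isMeagre_of_isOpen (hb.isOpen hWb) hWne ((hWT.union hUT).mono fun g hgW => ?_)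
    by_cases hgT : g ∈ T
    · exact Or.inr ⟨hWU hgW, hgT⟩
    · exact Or.inl ⟨hgW, hgT⟩

end Meagre

section Vaught

variable {G X : Type*} [TopologicalSpace G]

/-- The Vaught transform `A^{ΔU}`. Meagreness is taken in `G` rather than in the subspace `U`;
for open `U` the two agree (`IsOpen.isMeagre_image_val_iff`). -/
def vaughtTransform (a : G → X → X) (U : Set G) (A : Set X) : Set X :=
  {x | ¬ IsMeagre (U ∩ (a · x) ⁻¹' A)}

variable (a : G → X → X)

theorem setOf_not_isMeagre_subtype_eq_vaughtTransform {U : Set G} (hU : IsOpen U) (A : Set X) :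
    {x | ¬ IsMeagre {g : U | a g x ∈ A}} = vaughtTransform a U A := by
  ext x
  change ¬ IsMeagre (Subtype.val ⁻¹' ((a · x) ⁻¹' A) : Set U) ↔ _
  rw [← hU.isMeagre_image_val_iff, Subtype.image_preimage_coe]
  rfl

theorem vaughtTransform_iUnion {ι : Sort*} [Countable ι] (U : Set G) (A : ι → Set X) :
    vaughtTransform a U (⋃ i, A i) = ⋃ i, vaughtTransform a U (A i) := by
  ext x
  simp only [vaughtTransform, mem_ofPred_eq, mem_iUnion, preimage_iUnion, inter_iUnion]
  exact not_isMeagre_iUnion_iff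

theorem vaughtTransform_compl [BaireSpace G] {b : Set (Set G)} (hb : IsTopologicalBasis b)
    {U : Set G} (hU : IsOpen U) {A : Set X} (hA : ∀ x, BaireMeasurableSet ((a · x) ⁻¹' A)) :
    vaughtTransform a U Aᶜ =
      ⋃ W ∈ {W ∈ b | W ⊆ U ∧ W.Nonempty}, (vaughtTransform a W A)ᶜ := by
  ext x
  simp only [vaughtTransform, mem_ofPred_eq, mem_iUnion, mem_compl_iff, not_not, exists_prop,
    and_assoc, preimage_compl]
  rw [(hA x).compl.not_isMeagre_inter_iff hb hU]
  simp only [sdiff_compl]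

variable [TopologicalSpace X]

theorem vaughtTransform_eq_biUnion_preimage [BaireSpace G] (ha : ∀ x, Continuous (a · x))
    {U : Set G} (hU : IsOpen U) {B : Set X} (hB : IsOpen B) :
    vaughtTransform a U B = ⋃ g ∈ U, a g ⁻¹' B := by
  ext x
  simp only [vaughtTransform, mem_ofPred_eq, mem_iUnion, exists_prop,
    (hU.inter (hB.preimage (ha x))).not_isMeagre_iff_nonempty]
  rfl

variable {a}

theorem isOpen_vaughtTransform [BaireSpace G] (ha : Continuous fun p : G × X => a p.1 p.2)
    {U : Set G} (hU : IsOpen U) {B : Set X} (hB : IsOpen B) :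
    IsOpen (vaughtTransform a U B) := by
  rw [vaughtTransform_eq_biUnion_preimage a (fun x => ha.comp (.prodMk_left x)) hU hB]
  exact isOpen_biUnion fun g _ => hB.preimage (ha.comp (.prodMk_right g))

theorem measurableSet_vaughtTransform [BaireSpace G] [SecondCountableTopology G]
    [MeasurableSpace X] [BorelSpace X] (ha : Continuous fun p : G × X => a p.1 p.2)
    {U : Set G} (hU : IsOpen U) {A : Set X} (hA : MeasurableSet A) :
    MeasurableSet (vaughtTransform a U A) := by
  borelize G
  induction A, hA using MeasurableSet.induction_on_open generalizing U with
  | isOpen B hB => exact (isOpen_vaughtTransform ha hU hB).measurableSet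
  | compl A hA ih =>
    have hAx x : BaireMeasurableSet ((a · x) ⁻¹' A) :=
      (hA.preimage (ha.comp (.prodMk_left x)).measurable).baireMeasurableSet
    rw [vaughtTransform_compl a (isBasis_countableBasis G) hU hAx]
    refine .biUnion ((countable_countableBasis G).mono (sep_subset _ _)) fun W hW => ?_
    exact (ih (isOpen_of_mem_countableBasis hW.1)).compl
  | iUnion A _ _ ih =>
    rw [vaughtTransform_iUnion]
    exact .iUnion fun i => ih i hU

end Vaught

theorem stmt_4_general {G X : Type} [TopologicalSpace G]
    [PolishSpace G] [TopologicalSpace X]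
    [MeasurableSpace X] [BorelSpace X]
    (a : G → X → X)
    (h_cont : Continuous (fun p : G × X => a p.1 p.2))
    (U : Set G) (hU : IsOpen U)
    (A : Set X) (hA : MeasurableSet A) :
    MeasurableSet {x : X | ¬ IsMeagre {g : U | a (g : G) x ∈ A}} ∧
      ∀ B : Set X, IsOpen B → IsOpen {x : X | ¬ IsMeagre {g : U | a (g : G) x ∈ B}} := by
  simp only [setOf_not_isMeagre_subtype_eq_vaughtTransform a hU]
  exact ⟨measurableSet_vaughtTransform h_cont hU hA,
    fun B hB => isOpen_vaughtTransform h_cont hU hB⟩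

/-- Let `G` be a Polish group acting continuously on a Polish space `X`,
`U ⊆ G` open nonempty, and `A ⊆ X` Borel.  Then the Vaught transform
`A^{ΔU} = {x : {g ∈ U : g·x ∈ A} is nonmeager in U}` is Borel, and for open
`B`, `B^{ΔU}` is open. -/
theorem stmt_4 {G X : Type} [Group G] [TopologicalSpace G] [IsTopologicalGroup G]
    [PolishSpace G] [TopologicalSpace X] [PolishSpace X]
    [MeasurableSpace X] [BorelSpace X]
    (a : G → X → X)
    (h_one : ∀ x, a 1 x = x)
    (h_mul : ∀ g h x, a (g * h) x = a g (a h x))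
    (h_cont : Continuous (fun p : G × X => a p.1 p.2))
    (U : Set G) (hU : IsOpen U) (hUne : U.Nonempty)
    (A : Set X) (hA : MeasurableSet A) :
    MeasurableSet {x : X | ¬ IsMeagre {g : U | a (g : G) x ∈ A}} ∧
      ∀ B : Set X, IsOpen B → IsOpen {x : X | ¬ IsMeagre {g : U | a (g : G) x ∈ B}} :=
  stmt_4_general a h_cont U hU A hA
end

section
/- Let G be a Polish group acting in a Borel way on a standard Borel space X, and let {S_n} be a sequence of Borel subsets of X separating points. Define f(x) = (D({g : g·x ∈ S_n})⁻¹)_n ∈ F(G)^ℕ, where D(A) = {g ∈ G : A is nonmeager in every neighborhood of g}. Then f is an injective equivariant Borel map into F(G)^ℕ with the coordinatewise left-translation action. -/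
open TopologicalSpace

/-- The Effros Borel structure on the space of closed subsets of `G`. -/
def effrosBorel (G : Type) [TopologicalSpace G] : MeasurableSpace (Closeds G) :=
  MeasurableSpace.generateFrom
    {S | ∃ V : Set G, IsOpen V ∧ S = {F : Closeds G | ((F : Set G) ∩ V).Nonempty}}

/-- Left translation on closed subsets of a topological group. -/
def leftTranslate {G : Type} [Group G] [TopologicalSpace G] [IsTopologicalGroup G]
    (g : G) (F : Closeds G) : Closeds G :=
  ⟨(fun h => g * h) '' (F : Set G),
    (Homeomorph.mulLeft g).isClosedMap _ F.isClosed'⟩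

lemma isClosed_localProp {G : Type} [TopologicalSpace G] (P : Set G → Prop) :
    IsClosed {g : G | ∀ U : Set G, IsOpen U → g ∈ U → P U} := by
  rw [← isOpen_compl_iff]
  have : {g : G | ∀ U : Set G, IsOpen U → g ∈ U → P U}ᶜ =
      ⋃₀ {U : Set G | IsOpen U ∧ ¬ P U} := by
    ext g
    simp only [Set.mem_compl_iff, Set.mem_setOf_eq, Set.mem_sUnion, not_forall]
    constructor
    · rintro ⟨U, hU, hg, hP⟩; exact ⟨U, ⟨hU, hP⟩, hg⟩
    · rintro ⟨U, ⟨hU, hP⟩, hg⟩; exact ⟨U, hU, hg, hP⟩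
  rw [this]
  exact isOpen_sUnion fun U hU => hU.1

/-- `D(A)`: the closed set of points of `G` near which `A` is locally
nonmeager, i.e. `A` is nonmeager in every open neighborhood of the point
(nonmeager computed in the subspace). -/
def Dset {G : Type} [TopologicalSpace G] (A : Set G) : Closeds G :=
  ⟨{g : G | ∀ U : Set G, IsOpen U → g ∈ U → ¬ IsMeagre {u : U | (u : G) ∈ A}},
    isClosed_localProp _⟩

/-- The inverse `F⁻¹ = {g⁻¹ : g ∈ F}` of a closed subset of a topological
group. -/
def invClosed {G : Type} [Group G] [TopologicalSpace G] [IsTopologicalGroup G]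
    (F : Closeds G) : Closeds G :=
  ⟨(fun g : G => g⁻¹) ⁻¹' (F : Set G), F.isClosed'.preimage continuous_inv⟩

/-!
A Baire-measurable set `A ⊆ G` differs from the closed set `D(A)` by a meagre set. So if `x` and
`y` have the same image, then for comeagre many `g` the points `g • x` and `g • y` lie in the same
sets `S n`, hence coincide, and `x = y`. Equivariance is the translation invariance
`D(A g) = D(A) g`. Measurability is the Montgomery–Novikov theorem: for Borel `A ⊆ G × X` and open
`W`, the set of `x` for which `W ∩ A_x` is meagre is Borel. The class of sets with this property
is trivially closed under countable unions, and under complements because `W \ B` is meagre iff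
`B` is nonmeagre in every nonempty basic open subset of `W`.
-/

open Topology Filter Set MeasureTheory

section Meagre

variable {α β : Type*} [TopologicalSpace α] [TopologicalSpace β]

theorem isMeagre_congr {s t : Set α} (h : s =ᵇ t) : IsMeagre s ↔ IsMeagre t :=
  congr_sets (eventuallyEq_set.mp h.compl)

theorem Homeomorph.isMeagre_preimage (e : α ≃ₜ β) {s : Set β} :
    IsMeagre (e ⁻¹' s) ↔ IsMeagre s := by
  rw [IsMeagre, IsMeagre, ← preimage_compl, ← mem_map, e.residual_map_eq]

theorem IsOpen.isMeagre_iff [BaireSpace α] {U : Set α} (hU : IsOpen U) :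
    IsMeagre U ↔ U = ∅ :=
  ⟨fun h => not_nonempty_iff_eq_empty.mp fun hne => not_isMeagre_of_isOpen hU hne h,
    fun h => h ▸ IsMeagre.empty⟩

theorem isMeagre_subtype_iff {U : Set α} (hU : IsOpen U) (A : Set α) :
    IsMeagre {u : U | (u : α) ∈ A} ↔ IsMeagre (U ∩ A) := by
  refine ⟨fun h => ?_, fun h => ?_⟩
  · rw [← Subtype.image_preimage_coe]
    exact h.image_val
  · exact (h.preimage_of_isOpenMap continuous_subtype_val hU.isOpenMap_subtype_val).mono
      fun u (hu : (u : α) ∈ A) => (⟨u.2, hu⟩ : (u : α) ∈ U ∩ A)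

theorem not_isMeagre_inter_iff_of_residualEq [BaireSpace α] {A U W : Set α} (hU : IsOpen U)
    (hAU : A =ᵇ U) (hW : IsOpen W) : ¬IsMeagre (W ∩ A) ↔ (W ∩ U).Nonempty := by
  rw [isMeagre_congr ((EventuallyEq.refl _ W).inter hAU), (hW.inter hU).isMeagre_iff]
  exact nonempty_iff_ne_empty.symm

theorem isMeagre_diff_iff_forall_countableBasis [BaireSpace α] [SecondCountableTopology α]
    {A W : Set α} (hA : BaireMeasurableSet A) (hW : IsOpen W) :
    IsMeagre (W \ A) ↔ ∀ V ∈ countableBasis α, V ⊆ W → V.Nonempty → ¬IsMeagre (V ∩ A) := by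
  obtain ⟨U, hU, hAU⟩ := hA.residualEq_isOpen
  have hWA : (W \ A : Set α) =ᵇ (W \ closure U : Set α) :=
    (EventuallyEq.refl _ W).diff (hAU.trans (closure_residualEq hU.isLocallyClosed).symm)
  rw [isMeagre_congr hWA, (hW.sdiff isClosed_closure).isMeagre_iff, sdiff_eq_empty]
  refine ⟨fun hWU V hV hVW ⟨x, hx⟩ => ?_, fun h x hxW => mem_closure_iff.mpr fun O hO hxO => ?_⟩
  · rw [not_isMeagre_inter_iff_of_residualEq hU hAU (isOpen_of_mem_countableBasis hV)]
    exact mem_closure_iff.mp (hWU (hVW hx)) V (isOpen_of_mem_countableBasis hV) hx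
  · obtain ⟨V, hV, hxV, hVO⟩ :=
      (isBasis_countableBasis α).exists_subset_of_mem_open (mem_inter hxO hxW) (hO.inter hW)
    have := h V hV (hVO.trans inter_subset_right) ⟨x, hxV⟩
    rw [not_isMeagre_inter_iff_of_residualEq hU hAU (isOpen_of_mem_countableBasis hV)] at this
    exact this.mono (inter_subset_inter_left _ (hVO.trans inter_subset_left))

end Meagre

section Dset

variable {α β : Type} [TopologicalSpace α] [TopologicalSpace β]

theorem mem_Dset_iff {A : Set α} {g : α} :
    g ∈ (Dset A : Set α) ↔ ∀ W, IsOpen W → g ∈ W → ¬IsMeagre (W ∩ A) :=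
  forall₂_congr fun _ hW => imp_congr_right fun _ => not_congr (isMeagre_subtype_iff hW A)

theorem coe_Dset_of_residualEq [BaireSpace α] {A U : Set α} (hU : IsOpen U) (hAU : A =ᵇ U) :
    (Dset A : Set α) = closure U := by
  ext g
  rw [mem_Dset_iff, mem_closure_iff]
  exact forall₂_congr fun W hW =>
    imp_congr_right fun _ => not_isMeagre_inter_iff_of_residualEq hU hAU hW

theorem BaireMeasurableSet.residualEq_Dset [BaireSpace α] {A : Set α}
    (hA : BaireMeasurableSet A) : A =ᵇ (Dset A : Set α) := by
  obtain ⟨U, hU, hAU⟩ := hA.residualEq_isOpen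
  rw [coe_Dset_of_residualEq hU hAU]
  exact hAU.trans (closure_residualEq hU.isLocallyClosed).symm

theorem Dset_inter_nonempty_iff [BaireSpace α] {A W : Set α} (hA : BaireMeasurableSet A)
    (hW : IsOpen W) : ((Dset A : Set α) ∩ W).Nonempty ↔ ¬IsMeagre (W ∩ A) := by
  obtain ⟨U, hU, hAU⟩ := hA.residualEq_isOpen
  rw [coe_Dset_of_residualEq hU hAU, closure_inter_open_nonempty_iff hW, inter_comm,
    not_isMeagre_inter_iff_of_residualEq hU hAU hW]

theorem coe_Dset_preimage (e : α ≃ₜ β) (A : Set β) :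
    (Dset (e ⁻¹' A) : Set α) = e ⁻¹' Dset A := by
  ext g
  simp only [mem_preimage, mem_Dset_iff]
  refine ⟨fun h W hW hgW => ?_, fun h W hW hgW => ?_⟩
  · rw [← e.isMeagre_preimage]
    exact h _ (hW.preimage e.continuous) hgW
  · have := h (e.symm ⁻¹' W) (hW.preimage e.symm.continuous) (by simpa using hgW)
    rwa [← e.isMeagre_preimage, preimage_inter, ← preimage_comp, e.symm_comp_self,
      preimage_id] at this

end Dset

section Group

variable {G : Type} [Group G] [TopologicalSpace G] [IsTopologicalGroup G]

theorem invClosed_involutive : Function.Involutive (invClosed (G := G)) := fun F =>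
  Closeds.ext <| by ext; simp [invClosed]

theorem invClosed_Dset_preimage_mulRight (g : G) (A : Set G) :
    invClosed (Dset ((· * g) ⁻¹' A)) = leftTranslate g (invClosed (Dset A)) := by
  apply SetLike.coe_injective
  change (·⁻¹) ⁻¹' (Dset (Homeomorph.mulRight g ⁻¹' A) : Set G) = _
  rw [coe_Dset_preimage]
  ext k
  simp [invClosed, leftTranslate, image_mul_left, mul_inv_rev]

theorem measurable_invClosed : Measurable[effrosBorel G, effrosBorel G] (invClosed (G := G)) := by
  let := effrosBorel G
  refine measurable_generateFrom ?_
  rintro _ ⟨V, hV, rfl⟩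
  refine MeasurableSpace.measurableSet_generateFrom ⟨(·⁻¹) ⁻¹' V, hV.preimage continuous_inv, ?_⟩
  ext F
  exact ⟨fun ⟨x, hx⟩ => ⟨x⁻¹, by simpa [invClosed] using hx⟩,
    fun ⟨y, hy⟩ => ⟨y⁻¹, by simpa [invClosed] using hy⟩⟩

end Group

section MontgomeryNovikov

variable {G X : Type*} [TopologicalSpace G] [MeasurableSpace X]

def MeagreSectionsMeasurable (A : Set (G × X)) : Prop :=
  (∀ x, BaireMeasurableSet {g | (g, x) ∈ A}) ∧
    ∀ W : Set G, IsOpen W → MeasurableSet {x | IsMeagre (W ∩ {g | (g, x) ∈ A})}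

namespace MeagreSectionsMeasurable

theorem prod [MeasurableSpace G] [BorelSpace G] {s : Set G} {t : Set X} (hs : MeasurableSet s)
    (ht : MeasurableSet t) : MeagreSectionsMeasurable (s ×ˢ t) := by
  refine ⟨fun x => ?_, fun W _ => ?_⟩
  · by_cases hx : x ∈ t
    · simpa [hx] using hs.baireMeasurableSet
    · simpa [hx] using MeasurableSet.empty.baireMeasurableSet (α := G)
  · convert (ht.inter (MeasurableSet.const (IsMeagre (W ∩ s)))).union ht.compl using 1
    ext x
    by_cases hx : x ∈ t <;> simp [hx, IsMeagre.empty]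

theorem iUnion {A : ℕ → Set (G × X)} (hA : ∀ n, MeagreSectionsMeasurable (A n)) :
    MeagreSectionsMeasurable (⋃ n, A n) := by
  have hsec : ∀ x, {g | (g, x) ∈ ⋃ n, A n} = ⋃ n, {g | (g, x) ∈ A n} := fun x => by
    ext; simp
  refine ⟨fun x => ?_, fun W hW => ?_⟩
  · rw [hsec]
    exact .iUnion fun n => (hA n).1 x
  · have : {x | IsMeagre (W ∩ {g | (g, x) ∈ ⋃ n, A n})} =
        ⋂ n, {x | IsMeagre (W ∩ {g | (g, x) ∈ A n})} := by
      ext x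
      simp only [hsec, inter_iUnion, mem_ofPred_eq, mem_iInter]
      exact ⟨fun h n => h.mono (subset_iUnion (fun i => W ∩ {g | (g, x) ∈ A i}) n), isMeagre_iUnion⟩
    rw [this]
    exact .iInter fun n => (hA n).2 W hW

theorem compl [BaireSpace G] [SecondCountableTopology G] {A : Set (G × X)}
    (hA : MeagreSectionsMeasurable A) : MeagreSectionsMeasurable Aᶜ := by
  refine ⟨fun x => (hA.1 x).compl, fun W hW => ?_⟩
  have : {x | IsMeagre (W ∩ {g | (g, x) ∈ Aᶜ})} =
      ⋂ V ∈ {V ∈ countableBasis G | V ⊆ W ∧ V.Nonempty},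
        {x | IsMeagre (V ∩ {g | (g, x) ∈ A})}ᶜ := by
    ext x
    simp only [mem_iInter, mem_sep_iff, mem_compl_iff, and_imp]
    exact isMeagre_diff_iff_forall_countableBasis (hA.1 x) hW
  rw [this]
  exact .biInter ((countable_countableBasis G).mono (sep_subset _ _)) fun V hV =>
    (hA.2 V (isOpen_of_mem_countableBasis hV.1)).compl

end MeagreSectionsMeasurable

theorem MeasurableSet.meagreSectionsMeasurable [MeasurableSpace G] [BorelSpace G] [BaireSpace G]
    [SecondCountableTopology G] {A : Set (G × X)} (hA : MeasurableSet A) :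
    MeagreSectionsMeasurable A := by
  rw [← generateFrom_prod] at hA
  induction A, hA using MeasurableSpace.generateFrom_induction with
  | hC _ hst =>
    obtain ⟨s, hs, t, ht, rfl⟩ := hst
    exact .prod hs ht
  | empty => simpa using MeagreSectionsMeasurable.prod (X := X) (G := G) .empty .empty
  | compl _ _ h => exact h.compl
  | iUnion _ _ h => exact .iUnion h

end MontgomeryNovikov

theorem measurable_Dset_section {G X : Type} [TopologicalSpace G] [MeasurableSpace G]
    [BorelSpace G] [BaireSpace G] [SecondCountableTopology G] [MeasurableSpace X]
    {A : Set (G × X)} (hA : MeasurableSet A) :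
    Measurable[_, effrosBorel G] fun x => Dset {g | (g, x) ∈ A} := by
  obtain ⟨hBaire, hMeagre⟩ := hA.meagreSectionsMeasurable
  let := effrosBorel G
  refine measurable_generateFrom ?_
  rintro _ ⟨W, hW, rfl⟩
  have : (fun x => Dset {g | (g, x) ∈ A}) ⁻¹' {F : Closeds G | ((F : Set G) ∩ W).Nonempty} =
      {x | IsMeagre (W ∩ {g | (g, x) ∈ A})}ᶜ := by
    ext x
    exact Dset_inter_nonempty_iff (hBaire x) hW
  rw [this]
  exact (hMeagre W hW).compl

theorem eq_of_forall_Dset_eq {G X : Type} [Group G] [TopologicalSpace G] [BaireSpace G]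
    [MeasurableSpace G] [BorelSpace G] [MulAction G X] [MeasurableSpace X] [MeasurableSMul G X]
    {S : ℕ → Set X} (hS : ∀ n, MeasurableSet (S n))
    (h_sep : ∀ x y : X, x ≠ y → ∃ n, (x ∈ S n ∧ y ∉ S n) ∨ (y ∈ S n ∧ x ∉ S n)) {x y : X}
    (h : ∀ n, Dset {g : G | g • x ∈ S n} = Dset {g : G | g • y ∈ S n}) : x = y := by
  have hBaire : ∀ z n, BaireMeasurableSet {g : G | g • z ∈ S n} := fun z n =>
    (measurable_smul_const z (hS n)).baireMeasurableSet
  have hres : ∀ n, {g : G | g • x ∈ S n} =ᵇ {g : G | g • y ∈ S n} := fun n => by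
    have := (hBaire x n).residualEq_Dset
    rw [h n] at this
    exact this.trans (hBaire y n).residualEq_Dset.symm
  have hAll : ∀ᶠ g in residual G, ∀ n, (g • x ∈ S n ↔ g • y ∈ S n) :=
    eventually_countable_forall.mpr fun n => eventuallyEq_set.mp (hres n)
  obtain ⟨g, hg⟩ := (dense_of_mem_residual hAll).nonempty
  by_contra hxy
  obtain ⟨n, hn⟩ := h_sep _ _ ((MulAction.injective g).ne hxy)
  have := hg n
  tauto

theorem stmt_13_general {G X : Type} [Group G] [TopologicalSpace G] [IsTopologicalGroup G]
    [PolishSpace G] [MeasurableSpace G] [BorelSpace G]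
    [MeasurableSpace X]
    (a : G → X → X)
    (h_one : ∀ x, a 1 x = x)
    (h_mul : ∀ g h x, a (g * h) x = a g (a h x))
    (h_meas : Measurable (fun p : G × X => a p.1 p.2))
    (S : ℕ → Set X) (hS : ∀ n, MeasurableSet (S n))
    (h_sep : ∀ x y : X, x ≠ y → ∃ n, (x ∈ S n ∧ y ∉ S n) ∨ (y ∈ S n ∧ x ∉ S n)) :
    Function.Injective (fun (x : X) (n : ℕ) => invClosed (Dset {g : G | a g x ∈ S n})) ∧
    @Measurable X (ℕ → Closeds G) ‹MeasurableSpace X›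
      (@MeasurableSpace.pi ℕ (fun _ => Closeds G) (fun _ => effrosBorel G))
      (fun (x : X) (n : ℕ) => invClosed (Dset {g : G | a g x ∈ S n})) ∧
    ∀ (g : G) (x : X) (n : ℕ),
      invClosed (Dset {h : G | a h (a g x) ∈ S n}) =
        leftTranslate g (invClosed (Dset {h : G | a h x ∈ S n})) := by
  let : MulAction G X := { smul := a, one_smul := h_one, mul_smul := h_mul }
  have : MeasurableSMul₂ G X := ⟨h_meas⟩
  refine ⟨fun x y hxy => eq_of_forall_Dset_eq (G := G) hS h_sep fun n =>
    invClosed_involutive.injective (congrFun hxy n), ?_, fun g x n => ?_⟩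
  · let := effrosBorel G
    exact measurable_pi_lambda _ fun n =>
      measurable_invClosed.comp (measurable_Dset_section (h_meas (hS n)))
  · have : {h : G | a h (a g x) ∈ S n} = (· * g) ⁻¹' {h | a h x ∈ S n} :=
      Set.ext fun h => by simp [h_mul]
    rw [this, invClosed_Dset_preimage_mulRight]

/-- Let `G` be a Polish group acting in a Borel way on a standard Borel space
`X` and let `(S n)` be a sequence of Borel sets separating points.  Then
`f x = (D({g : g·x ∈ S n})⁻¹)ₙ` is an injective equivariant Borel map into
`F(G)^ℕ` with the coordinatewise left translation action. -/
theorem stmt_13 {G X : Type} [Group G] [TopologicalSpace G] [IsTopologicalGroup G]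
    [PolishSpace G] [MeasurableSpace G] [BorelSpace G]
    [MeasurableSpace X] [StandardBorelSpace X]
    (a : G → X → X)
    (h_one : ∀ x, a 1 x = x)
    (h_mul : ∀ g h x, a (g * h) x = a g (a h x))
    (h_meas : Measurable (fun p : G × X => a p.1 p.2))
    (S : ℕ → Set X) (hS : ∀ n, MeasurableSet (S n))
    (h_sep : ∀ x y : X, x ≠ y → ∃ n, (x ∈ S n ∧ y ∉ S n) ∨ (y ∈ S n ∧ x ∉ S n)) :
    Function.Injective (fun (x : X) (n : ℕ) => invClosed (Dset {g : G | a g x ∈ S n})) ∧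
    @Measurable X (ℕ → Closeds G) ‹MeasurableSpace X›
      (@MeasurableSpace.pi ℕ (fun _ => Closeds G) (fun _ => effrosBorel G))
      (fun (x : X) (n : ℕ) => invClosed (Dset {g : G | a g x ∈ S n})) ∧
    ∀ (g : G) (x : X) (n : ℕ),
      invClosed (Dset {h : G | a h (a g x) ∈ S n}) =
        leftTranslate g (invClosed (Dset {h : G | a h x ∈ S n})) :=
  stmt_13_general a h_one h_mul h_meas S hS h_sep
end
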